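/- (van der Corput lemma for ℤ^r) Let (u_n)_{n∈ℤ^r} be a bounded family in a Hilbert space H, let (I_N) be a Følner sequence in ℤ^r and (a_N) a sequence in ℤ^r. If lim sup_{M→∞} lim sup_{N→∞} |(1/M^{2r}) Σ_{m_1,m_2 ∈ {1,...,M}^r} (1/|I_N|) Σ_{n ∈ I_N + a_N} ⟨u_{n+m_1}, u_{n+m_2}⟩| = 0, then (1/|I_N|) Σ_{n ∈ I_N + a_N} u_n → 0 in the norm of H. -/

import Mathlib

/-!
A bounded function has almost the same average over `I N` as over the translate `I N + m`, so
averaging the Følner averages `S N` of `u (· + a N)` further over the window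
`m ∈ {1, …, M}^r` changes them by `o(1)` as `N → ∞`. After exchanging the two averages, the
squared norm of the double average is at most the average over `n` of the squared norms of the
window averages of `u (n + ·)`, which expands into exactly the averaged inner products of the
hypothesis. Letting first `N` and then `M` tend to infinity gives `S N → 0`.
-/

open Filter Finset Topology
open scoped symmDiff RealInnerProductSpace

section Translation

variable {α G E : Type*} [SeminormedAddCommGroup E]

lemma norm_sum_sub_sum_le_card_symmDiff_mul [DecidableEq α] {f : α → E} {C : ℝ}
    (hf : ∀ x, ‖f x‖ ≤ C) (s t : Finset α) :
    ‖∑ x ∈ s, f x - ∑ x ∈ t, f x‖ ≤ #(s ∆ t) * C := by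
  have hcard : (#(s ∆ t) : ℝ) = #(s \ t) + #(t \ s) := by
    rw [symmDiff_def, sup_eq_union, card_union_of_disjoint disjoint_sdiff_sdiff]
    push_cast; rfl
  rw [← sum_sdiff_sub_sum_sdiff, hcard, add_mul]
  refine (norm_sub_le _ _).trans (add_le_add ?_ ?_) <;>
  · refine (norm_sum_le_of_le _ fun x _ => hf x).trans ?_
    rw [sum_const, nsmul_eq_mul]

variable [AddCommGroup G] [DecidableEq G] [NormedSpace ℝ E]

lemma norm_average_sub_average_add_le {f : G → E} {C : ℝ} (hf : ∀ x, ‖f x‖ ≤ C)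
    (s : Finset G) (g : G) :
    ‖(#s : ℝ)⁻¹ • ∑ x ∈ s, f x - (#s : ℝ)⁻¹ • ∑ x ∈ s, f (x + g)‖ ≤
      C * (#(s.image (· + g) ∆ s) / #s) := by
  have hsum : ∑ x ∈ s, f (x + g) = ∑ x ∈ s.image (· + g), f x :=
    (sum_image fun x _ y _ => add_right_cancel).symm
  rw [← smul_sub, norm_smul, norm_inv, RCLike.norm_natCast, hsum, norm_sub_rev]
  calc (#s : ℝ)⁻¹ * ‖∑ x ∈ s.image (· + g), f x - ∑ x ∈ s, f x‖
      ≤ (#s : ℝ)⁻¹ * (#(s.image (· + g) ∆ s) * C) := by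
        gcongr; exact norm_sum_sub_sum_le_card_symmDiff_mul hf _ _
    _ = C * (#(s.image (· + g) ∆ s) / #s) := by ring

lemma tendsto_norm_average_sub_average_add {ι : Type*} {l : Filter ι} {f : G → E} {C : ℝ}
    (hf : ∀ x, ‖f x‖ ≤ C) {I : ι → Finset G} {g : G}
    (hI : Tendsto (fun N => (#((I N).image (· + g) ∆ I N) : ℝ) / #(I N)) l (𝓝 0))
    (b : ι → G) :
    Tendsto (fun N => ‖(#(I N) : ℝ)⁻¹ • ∑ n ∈ I N, f (n + b N) -
      (#(I N) : ℝ)⁻¹ • ∑ n ∈ I N, f (n + b N + g)‖) l (𝓝 0) := by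
  refine squeeze_zero (fun _ => norm_nonneg _) (fun N => ?_)
    (by simpa only [mul_zero] using hI.const_mul C)
  simpa only [add_right_comm _ g] using
    norm_average_sub_average_add_le (f := (f <| · + b N)) (fun x => hf _) (I N) g

end Translation

section Averages

variable {ι κ E : Type*} [SeminormedAddCommGroup E] [NormedSpace ℝ E]

lemma norm_sub_average_le {s : Finset ι} (hs : s.Nonempty) (x : E) (y : ι → E) :
    ‖x - (#s : ℝ)⁻¹ • ∑ i ∈ s, y i‖ ≤ (#s : ℝ)⁻¹ * ∑ i ∈ s, ‖x - y i‖ := by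
  have hx : x = (#s : ℝ)⁻¹ • ∑ _i ∈ s, x := by
    rw [sum_const, ← Nat.cast_smul_eq_nsmul ℝ, smul_smul,
      inv_mul_cancel₀ (Nat.cast_ne_zero.2 hs.card_pos.ne'), one_smul]
  conv_lhs => rw [hx, ← smul_sub, ← sum_sub_distrib]
  rw [norm_smul, norm_inv, RCLike.norm_natCast]
  gcongr
  exact norm_sum_le _ _

lemma tendsto_norm_sub_average {l : Filter κ} {s : Finset ι} (hs : s.Nonempty)
    {x : κ → E} {y : ι → κ → E} (h : ∀ i ∈ s, Tendsto (fun N => ‖x N - y i N‖) l (𝓝 0)) :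
    Tendsto (fun N => ‖x N - (#s : ℝ)⁻¹ • ∑ i ∈ s, y i N‖) l (𝓝 0) := by
  refine squeeze_zero (fun _ => norm_nonneg _) (fun N => norm_sub_average_le hs _ _) ?_
  simpa using (tendsto_finsetSum s h).const_mul (#s : ℝ)⁻¹

lemma norm_average_sq_le (s : Finset ι) (w : ι → E) :
    ‖(#s : ℝ)⁻¹ • ∑ i ∈ s, w i‖ ^ 2 ≤ (#s : ℝ)⁻¹ * ∑ i ∈ s, ‖w i‖ ^ 2 := by
  have hcard : ((#s : ℝ)⁻¹) ^ 2 * #s = (#s : ℝ)⁻¹ := by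
    rcases eq_or_ne (#s : ℝ) 0 with h | h
    · simp [h]
    · field_simp
  rw [norm_smul, norm_inv, RCLike.norm_natCast, mul_pow]
  calc ((#s : ℝ)⁻¹) ^ 2 * ‖∑ i ∈ s, w i‖ ^ 2
      ≤ ((#s : ℝ)⁻¹) ^ 2 * (#s * ∑ i ∈ s, ‖w i‖ ^ 2) := by
        gcongr
        exact (pow_le_pow_left₀ (norm_nonneg _) (norm_sum_le s w) 2).trans
          sq_sum_le_card_mul_sum_sq
    _ = (#s : ℝ)⁻¹ * ∑ i ∈ s, ‖w i‖ ^ 2 := by rw [← mul_assoc, hcard]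

lemma abs_average_le {s : Finset ι} {g : ι → ℝ} {B : ℝ} (hB : 0 ≤ B)
    (hg : ∀ i ∈ s, |g i| ≤ B) : |(#s : ℝ)⁻¹ * ∑ i ∈ s, g i| ≤ B := by
  rcases s.eq_empty_or_nonempty with rfl | hs
  · simpa using hB
  rw [abs_mul, abs_inv, Nat.abs_cast, inv_mul_le_iff₀ (by exact_mod_cast hs.card_pos)]
  calc |∑ i ∈ s, g i| ≤ ∑ i ∈ s, |g i| := abs_sum_le_sum_abs _ _
    _ ≤ #s * B := by simpa using sum_le_sum hg

end Averages

section InnerProduct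

variable {ι κ E : Type*} [SeminormedAddCommGroup E] [InnerProductSpace ℝ E]

lemma norm_sum_sq_eq_sum_sum_inner (s : Finset ι) (v : ι → E) :
    ‖∑ i ∈ s, v i‖ ^ 2 = ∑ i ∈ s, ∑ j ∈ s, ⟪v i, v j⟫ := by
  rw [← real_inner_self_eq_norm_sq, sum_inner]
  simp_rw [inner_sum]

lemma norm_average_average_sq_le (s : Finset ι) (t : Finset κ) (v : ι → κ → E) :
    ‖(#t : ℝ)⁻¹ • ∑ m ∈ t, (#s : ℝ)⁻¹ • ∑ n ∈ s, v n m‖ ^ 2 ≤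
      ((#t : ℝ) ^ 2)⁻¹ * ∑ m₁ ∈ t, ∑ m₂ ∈ t, (#s : ℝ)⁻¹ * ∑ n ∈ s, ⟪v n m₁, v n m₂⟫ := by
  have hswap : (#t : ℝ)⁻¹ • ∑ m ∈ t, (#s : ℝ)⁻¹ • ∑ n ∈ s, v n m =
      (#s : ℝ)⁻¹ • ∑ n ∈ s, (#t : ℝ)⁻¹ • ∑ m ∈ t, v n m := by
    rw [← smul_sum, ← smul_sum, smul_comm, sum_comm]
  rw [hswap]
  refine (norm_average_sq_le _ _).trans_eq ?_
  simp_rw [norm_smul, norm_inv, RCLike.norm_natCast, mul_pow, norm_sum_sq_eq_sum_sum_inner,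
    mul_sum]
  rw [sum_comm]
  refine sum_congr rfl fun m₁ _ => ?_
  rw [sum_comm]
  refine sum_congr rfl fun m₂ _ => sum_congr rfl fun n _ => ?_
  ring

lemma abs_average_average_inner_le {s : Finset ι} {t : Finset κ} {v : ι → κ → E} {C : ℝ}
    (hv : ∀ n m, ‖v n m‖ ≤ C) :
    |((#t : ℝ) ^ 2)⁻¹ * ∑ m₁ ∈ t, ∑ m₂ ∈ t, (#s : ℝ)⁻¹ * ∑ n ∈ s, ⟪v n m₁, v n m₂⟫| ≤ C ^ 2 := by
  rw [← sum_product', sq, ← Nat.cast_mul, ← card_product]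
  refine abs_average_le (sq_nonneg C) fun m _ => abs_average_le (sq_nonneg C) fun n _ => ?_
  calc |⟪v n m.1, v n m.2⟫| ≤ ‖v n m.1‖ * ‖v n m.2‖ := abs_real_inner_le_norm _ _
    _ ≤ C ^ 2 := by
      rw [sq]
      exact mul_le_mul (hv _ _) (hv _ _) (norm_nonneg _) ((norm_nonneg _).trans (hv n m.1))

end InnerProduct

lemma tendsto_zero_of_limsup_limsup_eq_zero {α β E : Type*} [SeminormedAddCommGroup E]
    {l : Filter α} [l.NeBot] {l' : Filter β} [l'.NeBot]
    {S : β → E} {Q : α → β → E} {e : α → β → ℝ} {B : ℝ}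
    (hSQ : ∀ᶠ M in l, Tendsto (fun N => ‖S N - Q M N‖) l' (𝓝 0))
    (hQe : ∀ M N, ‖Q M N‖ ^ 2 ≤ e M N) (he : ∀ M N, |e M N| ≤ B)
    (hlim : limsup (fun M => limsup (fun N => |e M N|) l') l = 0) :
    Tendsto S l' (𝓝 0) := by
  rw [NormedAddGroup.tendsto_nhds_zero]
  intro ε hε
  have hbdd : ∀ M, IsBoundedUnder (· ≤ ·) l' fun N => |e M N| :=
    fun M => isBoundedUnder_of ⟨B, he M⟩
  have hcobdd : ∀ M, IsCoboundedUnder (· ≤ ·) l' fun N => |e M N| :=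
    fun M => (isBoundedUnder_of ⟨0, fun N => abs_nonneg (e M N)⟩).isCoboundedUnder_le
  have houter : ∀ᶠ M in l, limsup (fun N => |e M N|) l' < (ε / 2) ^ 2 :=
    eventually_lt_of_limsup_lt (hlim ▸ by positivity)
      (isBoundedUnder_of ⟨B, fun M => limsup_le_of_le (hcobdd M) (.of_forall (he M))⟩)
  obtain ⟨M, hM, hSQM⟩ := (houter.and hSQ).exists
  filter_upwards [eventually_lt_of_limsup_lt hM (hbdd M),
    hSQM.eventually_lt_const (half_pos hε)] with N heN hSQN
  have hQ : ‖Q M N‖ < ε / 2 :=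
    lt_of_pow_lt_pow_left₀ 2 (by positivity) ((hQe M N).trans (le_abs_self _) |>.trans_lt heN)
  linarith [norm_le_norm_sub_add (S N) (Q M N)]

theorem van_der_corput_zr_general
    {H : Type*} [NormedAddCommGroup H] [InnerProductSpace ℝ H]
    (r : ℕ) (u : (Fin r → ℤ) → H)
    (C : ℝ) (hu : ∀ n, ‖u n‖ ≤ C)
    (I : ℕ → Finset (Fin r → ℤ))
    (hF : ∀ g : Fin r → ℤ, Tendsto
      (fun N => ((((I N).image (· + g)) ∆ (I N)).card : ℝ) / ((I N).card : ℝ))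
      atTop (nhds 0))
    (a : ℕ → Fin r → ℤ)
    (hvdc : Filter.limsup (fun M : ℕ =>
        Filter.limsup (fun N =>
          |((M : ℝ) ^ (2 * r))⁻¹ *
            ∑ m₁ ∈ Fintype.piFinset (fun _ : Fin r => Finset.Icc (1:ℤ) M),
              ∑ m₂ ∈ Fintype.piFinset (fun _ : Fin r => Finset.Icc (1:ℤ) M),
                ((I N).card : ℝ)⁻¹ * ∑ n ∈ I N, ⟪u (n + a N + m₁), u (n + a N + m₂)⟫|)
          atTop) atTop = 0) :
    Tendsto (fun N => ‖((I N).card : ℝ)⁻¹ • ∑ n ∈ I N, u (n + a N)‖) atTop (nhds 0) := by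
  set P : ℕ → Finset (Fin r → ℤ) := fun M => Fintype.piFinset fun _ => Icc (1 : ℤ) M
  have hP : ∀ M : ℕ, (M : ℝ) ^ (2 * r) = (#(P M) : ℝ) ^ 2 := fun M => by
    simp [P, Fintype.card_piFinset, pow_mul']
  have hPne : ∀ M : ℕ, 1 ≤ M → (P M).Nonempty := fun M hM =>
    Fintype.piFinset_nonempty.2 fun _ => nonempty_Icc.2 (by exact_mod_cast hM)
  refine tendsto_zero_iff_norm_tendsto_zero.1 <| tendsto_zero_of_limsup_limsup_eq_zero
    (B := C ^ 2)
    (Q := fun M N => (#(P M) : ℝ)⁻¹ • ∑ m ∈ P M, (#(I N) : ℝ)⁻¹ • ∑ n ∈ I N, u (n + a N + m))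
    ?_ (fun M N => ?_) (fun M N => ?_) hvdc
  · filter_upwards [eventually_ge_atTop 1] with M hM
    exact tendsto_norm_sub_average (hPne M hM) fun m _ =>
      tendsto_norm_average_sub_average_add hu (hF m) a
  · rw [hP]
    exact norm_average_average_sq_le (I N) (P M) fun n m => u (n + a N + m)
  · rw [hP]
    exact abs_average_average_inner_le fun n m => hu (n + a N + m)

/-- The van der Corput lemma for `ℤ^r`: if `(u n)` is a bounded family in a Hilbert
space, `(I N)` a Følner sequence in `ℤ^r` and `(a N)` base points, and the iterated
limsup of the averaged inner products
`(1/M^{2r}) ∑_{m₁,m₂ ∈ {1,…,M}^r} (1/|I N|) ∑_{n ∈ I N + a N} ⟪u (n+m₁), u (n+m₂)⟫`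
vanishes, then `(1/|I N|) ∑_{n ∈ I N + a N} u n → 0` in norm. -/
theorem van_der_corput_zr
    {H : Type*} [NormedAddCommGroup H] [InnerProductSpace ℝ H] [CompleteSpace H]
    (r : ℕ) (u : (Fin r → ℤ) → H)
    (C : ℝ) (hu : ∀ n, ‖u n‖ ≤ C)
    (I : ℕ → Finset (Fin r → ℤ)) (hI : ∀ N, (I N).Nonempty)
    (hF : ∀ g : Fin r → ℤ, Tendsto
      (fun N => ((((I N).image (· + g)) ∆ (I N)).card : ℝ) / ((I N).card : ℝ))
      atTop (nhds 0))
    (a : ℕ → Fin r → ℤ)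
    (hvdc : Filter.limsup (fun M : ℕ =>
        Filter.limsup (fun N =>
          |((M : ℝ) ^ (2 * r))⁻¹ *
            ∑ m₁ ∈ Fintype.piFinset (fun _ : Fin r => Finset.Icc (1:ℤ) M),
              ∑ m₂ ∈ Fintype.piFinset (fun _ : Fin r => Finset.Icc (1:ℤ) M),
                ((I N).card : ℝ)⁻¹ * ∑ n ∈ I N, ⟪u (n + a N + m₁), u (n + a N + m₂)⟫|)
          atTop) atTop = 0) :
    Tendsto (fun N => ‖((I N).card : ℝ)⁻¹ • ∑ n ∈ I N, u (n + a N)‖) atTop (nhds 0) :=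
  van_der_corput_zr_general r u C hu I hF a hvdc
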